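/- arXiv:2409.04914 — 5 statements merged into one kernel-verified Lean document; each statement's English description precedes it below -/
import Mathlib

section
/- There exists a finite many-to-one matching market instance with contingent sibling priorities of absolute type — specifically with four schools, two levels, and four families each of size at most two, using a single tie-breaker at the family level — in which no contingent stable matching exists (i.e., every feasible matching is either wasteful or admits a student with contingent justified envy). -/
open scoped Classical

/-- A many-to-one matching market with levels, families, priority groups and
random tie-breakers, as in "Stable Matching with Contingent Priorities". -/
structure Market where
  Student : Type
  School : Type
  Level : Type
  [instFinS : Fintype Student]
  [instDecS : DecidableEq Student]
  [instFinC : Fintype School]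
  [instDecC : DecidableEq School]
  [instFinL : Fintype Level]
  [instDecL : DecidableEq Level]
  level : Student → Level
  sameFamily : Student → Student → Prop
  fam_refl : ∀ s, sameFamily s s
  fam_symm : ∀ s s', sameFamily s s' → sameFamily s' s
  fam_trans : ∀ s s' s'', sameFamily s s' → sameFamily s' s'' → sameFamily s s''
  cap : School → Level → ℕ
  /-- strict preference of each student over schools plus the outside option `none` -/
  pref : Student → Option School → Option School → Prop
  pref_irrefl : ∀ s o, ¬ pref s o o
  pref_trans : ∀ s o₁ o₂ o₃, pref s o₁ o₂ → pref s o₂ o₃ → pref s o₁ o₃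
  pref_total : ∀ s o o', o ≠ o' → pref s o o' ∨ pref s o' o
  nGroups : ℕ
  nGroups_pos : 1 ≤ nGroups
  group : Student → School → ℕ
  group_pos : ∀ s c, 1 ≤ group s c
  group_le : ∀ s c, group s c ≤ nGroups
  /-- random tie-breakers (smaller is better) -/
  tb : Student → School → ℝ
  tb_distinct : ∀ c s s', s ≠ s' → tb s c ≠ tb s' c

attribute [instance] Market.instFinS Market.instDecS Market.instFinC
  Market.instDecC Market.instFinL Market.instDecL

namespace Market

variable (M : Market)

/-- `s` weakly prefers `o` to `o'`. -/
def wPref (s : M.Student) (o o' : Option M.School) : Prop :=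
  o = o' ∨ M.pref s o o'

/-- A feasible matching: every assigned student finds their school acceptable and the
school offers seats at their level, and per-level capacities are respected. -/
def IsMatching (μ : M.Student → Option M.School) : Prop :=
  (∀ s c, μ s = some c → M.pref s (some c) none ∧ 0 < M.cap c (M.level s)) ∧
  (∀ c ℓ, (Finset.univ.filter fun s => μ s = some c ∧ M.level s = ℓ).card ≤ M.cap c ℓ)

/-- Number of students of level `ℓ` assigned to `c`. -/
noncomputable def assignedCount (μ : M.Student → Option M.School) (c : M.School)
    (ℓ : M.Level) : ℕ :=
  (Finset.univ.filter fun s => μ s = some c ∧ M.level s = ℓ).card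

/-- Non-wastefulness. -/
def NonWasteful (μ : M.Student → Option M.School) : Prop :=
  ¬ ∃ s c, M.pref s (some c) (μ s) ∧
    M.assignedCount μ c (M.level s) < M.cap c (M.level s)

/-- Initial priority order at school `c` (groups first, tie-breakers second). -/
def initPrio (c : M.School) (s s' : M.Student) : Prop :=
  M.group s c < M.group s' c ∨ (M.group s c = M.group s' c ∧ M.tb s c < M.tb s' c)

/-- Initial stability. -/
def InitStable (μ : M.Student → Option M.School) : Prop :=
  M.IsMatching μ ∧ M.NonWasteful μ ∧
  ¬ ∃ s s' c, μ s' = some c ∧ M.level s = M.level s' ∧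
      M.pref s (some c) (μ s) ∧ M.initPrio c s s'

/-- Number of students of `s`'s level with strictly higher initial priority at `c`
who weakly prefer `c` to their match. -/
noncomputable def rivalCount (μ : M.Student → Option M.School) (s : M.Student)
    (c : M.School) : ℕ :=
  (Finset.univ.filter fun s'' => M.level s'' = M.level s ∧ M.initPrio c s'' s ∧
    M.wPref s'' (some c) (μ s'')).card

/-- `s` provides contingent priority at `c` (Definition 2, refined). -/
def Provides (μ : M.Student → Option M.School) (s : M.Student) (c : M.School) : Prop :=
  μ s = some c ∧
  (∃ s', s' ≠ s ∧ M.sameFamily s s' ∧ M.wPref s' (some c) (μ s')) ∧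
  M.rivalCount μ s c < M.cap c (M.level s)

/-- `s` is the effective priority provider of their family at `c`: the provider with
the most favorable tie-breaker. -/
def EffProvider (μ : M.Student → Option M.School) (s : M.Student) (c : M.School) : Prop :=
  M.Provides μ s c ∧
  ∀ s', s' ≠ s → M.sameFamily s s' → M.Provides μ s' c → M.tb s c < M.tb s' c

/-- Contingent group under absolute priorities. -/
noncomputable def absGroup (μ : M.Student → Option M.School) (s : M.Student)
    (c : M.School) : ℕ :=
  if M.group s c < M.nGroups ∨
      (M.EffProvider μ s c ∧ ∃ s', s' ≠ s ∧ M.sameFamily s s' ∧ μ s' = some c) ∨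
      (∃ s', s' ≠ s ∧ M.sameFamily s s' ∧ M.EffProvider μ s' c)
  then M.group s c else M.nGroups + 1

/-- Contingent priority order under absolute priorities. -/
noncomputable def absPrio (μ : M.Student → Option M.School) (c : M.School)
    (s s' : M.Student) : Prop :=
  M.absGroup μ s c < M.absGroup μ s' c ∨
  (M.absGroup μ s c = M.absGroup μ s' c ∧ M.tb s c < M.tb s' c)

/-- Contingent stability under absolute priorities. -/
def AbsStable (μ : M.Student → Option M.School) : Prop :=
  M.IsMatching μ ∧ M.NonWasteful μ ∧
  ¬ ∃ s s' c, μ s' = some c ∧ M.level s = M.level s' ∧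
      M.pref s (some c) (μ s) ∧ M.absPrio μ c s s'

/-- Contingent tie-breaker under partial priorities: a no-priority student inherits
their effective provider's tie-breaker when it is more favorable. -/
noncomputable def partialTb (μ : M.Student → Option M.School) (s : M.Student)
    (c : M.School) : ℝ :=
  if h : M.group s c = M.nGroups ∧ ¬ M.EffProvider μ s c ∧
      ∃ s', s' ≠ s ∧ M.sameFamily s s' ∧ M.EffProvider μ s' c ∧ M.tb s' c < M.tb s c
  then M.tb h.2.2.choose c
  else M.tb s c

/-- Contingent priority order under partial priorities: groups unchanged, contingent
tie-breakers first, with residual ties (within a family) broken by the initial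
tie-breakers (the ε-perturbation of Definition 5). -/
noncomputable def partialPrio (μ : M.Student → Option M.School) (c : M.School)
    (s s' : M.Student) : Prop :=
  M.group s c < M.group s' c ∨
  (M.group s c = M.group s' c ∧
    (M.partialTb μ s c < M.partialTb μ s' c ∨
      (M.partialTb μ s c = M.partialTb μ s' c ∧ M.tb s c < M.tb s' c)))

/-- Contingent stability under partial priorities. -/
def PartialStable (μ : M.Student → Option M.School) : Prop :=
  M.IsMatching μ ∧ M.NonWasteful μ ∧
  ¬ ∃ s s' c, μ s' = some c ∧ M.level s = M.level s' ∧
      M.pref s (some c) (μ s) ∧ M.partialPrio μ c s s'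

/-- Tie-breakers are at the family level: members of a family compare the same way
against any student outside the family. -/
def FamilyTB : Prop :=
  ∀ c (s s' a : M.Student), M.sameFamily s s' → ¬ M.sameFamily s a →
    (M.tb s c < M.tb a c ↔ M.tb s' c < M.tb a c)

/-- Size of the family of `s`. -/
noncomputable def famSize (s : M.Student) : ℕ :=
  (Finset.univ.filter fun s' => M.sameFamily s s').card

/-- Number of families in the market. -/
noncomputable def numFamilies : ℕ :=
  (Finset.univ.image fun s : M.Student =>
    Finset.univ.filter fun s' => M.sameFamily s s').card

/-- Rank of an outcome in a student's preference list (`none` gets rank `|≻ₛ|+1`,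
the penalty for being unassigned). -/
noncomputable def rankVal (s : M.Student) (o : Option M.School) : ℕ :=
  (Finset.univ.filter fun c : M.School => M.pref s (some c) o).card + 1

/-- Total rank objective of a matching. -/
noncomputable def cost (μ : M.Student → Option M.School) : ℕ :=
  ∑ s, M.rankVal s (μ s)

/-- Rank-optimal contingent stable matching under absolute priorities. -/
def RankOptAbs (μ : M.Student → Option M.School) : Prop :=
  M.AbsStable μ ∧ ∀ μ', M.AbsStable μ' → M.cost μ ≤ M.cost μ'

/-- Rank-optimal contingent stable matching under partial priorities. -/
def RankOptPartial (μ : M.Student → Option M.School) : Prop :=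
  M.PartialStable μ ∧ ∀ μ', M.PartialStable μ' → M.cost μ ≤ M.cost μ'

end Market

/-!
Every student starts in the single initial priority group, so at each school exactly the
providers and receivers of contingent priority keep group 1 and everybody else drops to group 2.
Feasibility and non-wastefulness leave six matchings (three placements of the level-0 students
times two of the level-1 students), and in each of them the contingent priorities created by
where the siblings sit give some student justified envy. This is verified by evaluating every
feasible assignment.
-/

namespace AbsCounterexample

abbrev Student := Fin 6
abbrev School := Fin 4
abbrev Level := Fin 2

def family : Student → Fin 4 := ![0, 0, 1, 1, 2, 3]

def level : Student → Level := ![0, 1, 0, 1, 0, 1]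

def tieBreak : Student → ℕ := ![30, 31, 10, 11, 0, 20]

def capacity : School → Level → ℕ := ![![1, 1], ![1, 0], ![1, 0], ![1, 2]]

-- Most preferred first; the schools listed after the outside option `none` are unacceptable.
def prefList : Student → List (Option School) :=
  ![[some 0, none, some 1, some 2, some 3],
    [some 0, some 1, some 2, none, some 3],
    [some 3, some 2, none, some 0, some 1],
    [some 1, some 0, some 3, some 2, none],
    [some 3, some 0, some 1, none, some 2],
    [some 3, none, some 1, some 0, some 2]]

def rank (s : Student) (o : Option School) : ℕ := (prefList s).idxOf o

theorem mem_prefList : ∀ s o, o ∈ prefList s := by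
  decide

theorem rank_injective (s : Student) : Function.Injective (rank s) :=
  fun _ _ h => (List.idxOf_inj (mem_prefList s _)).1 h

noncomputable abbrev market : Market where
  Student := Student
  School := School
  Level := Level
  level := level
  sameFamily s s' := family s = family s'
  fam_refl _ := rfl
  fam_symm _ _ := Eq.symm
  fam_trans _ _ _ := Eq.trans
  cap := capacity
  pref s o o' := rank s o < rank s o'
  pref_irrefl _ _ := lt_irrefl _
  pref_trans _ _ _ _ := lt_trans
  pref_total s _ _ h := Nat.lt_or_gt_of_ne ((rank_injective s).ne h)
  nGroups := 1
  nGroups_pos := le_rfl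
  group _ _ := 1
  group_pos _ _ := le_rfl
  group_le _ _ := le_rfl
  tb s _ := tieBreak s
  tb_distinct _ s s' h := by
    simpa using (show Function.Injective tieBreak by decide).ne h

/- The `Market` notions are decided classically and compare real tie-breakers, so the kernel
cannot evaluate them; the following are the same notions for `market` in decidable form. -/

abbrev WeaklyPrefers (s : Student) (o o' : Option School) : Prop :=
  o = o' ∨ rank s o < rank s o'

def assigned (μ : Student → Option School) (c : School) (ℓ : Level) : ℕ :=
  (Finset.univ.filter fun s => μ s = some c ∧ level s = ℓ).card

def rivals (μ : Student → Option School) (s : Student) (c : School) : ℕ :=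
  (Finset.univ.filter fun r => level r = level s ∧ tieBreak r < tieBreak s ∧
    WeaklyPrefers r (some c) (μ r)).card

abbrev Provides (μ : Student → Option School) (s : Student) (c : School) : Prop :=
  μ s = some c ∧ (∃ s', s' ≠ s ∧ family s = family s' ∧ WeaklyPrefers s' (some c) (μ s')) ∧
    rivals μ s c < capacity c (level s)

abbrev EffProvider (μ : Student → Option School) (s : Student) (c : School) : Prop :=
  Provides μ s c ∧
    ∀ s', s' ≠ s → family s = family s' → Provides μ s' c → tieBreak s < tieBreak s'

abbrev KeepsGroup (μ : Student → Option School) (s : Student) (c : School) : Prop :=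
  (EffProvider μ s c ∧ ∃ s', s' ≠ s ∧ family s = family s' ∧ μ s' = some c) ∨
    ∃ s', s' ≠ s ∧ family s = family s' ∧ EffProvider μ s' c

set_option synthInstance.maxSize 2000 in
def absGroup (μ : Student → Option School) (s : Student) (c : School) : ℕ :=
  if KeepsGroup μ s c then 1 else 2

abbrev AbsPrio (μ : Student → Option School) (c : School) (s s' : Student) : Prop :=
  absGroup μ s c < absGroup μ s' c ∨
    (absGroup μ s c = absGroup μ s' c ∧ tieBreak s < tieBreak s')

abbrev Blocked (μ : Student → Option School) : Prop :=
  (∃ c ℓ, capacity c ℓ < assigned μ c ℓ) ∨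
  (∃ s c, rank s (some c) < rank s (μ s) ∧ assigned μ c (level s) < capacity c (level s)) ∨
  (∃ s s' c, μ s' = some c ∧ level s = level s' ∧ rank s (some c) < rank s (μ s) ∧
    AbsPrio μ c s s')

section

variable (μ : Student → Option School) (c : School)

theorem assignedCount_eq (ℓ : Level) : market.assignedCount μ c ℓ = assigned μ c ℓ := by
  unfold Market.assignedCount assigned
  congr

theorem initPrio_iff (s s' : Student) : market.initPrio c s s' ↔ tieBreak s < tieBreak s' :=
  (or_iff_right (lt_irrefl 1)).trans ((and_iff_right rfl).trans Nat.cast_lt)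

theorem rivalCount_eq (s : Student) : market.rivalCount μ s c = rivals μ s c := by
  unfold Market.rivalCount rivals
  congr 1
  ext r
  rw [Finset.mem_filter, Finset.mem_filter, initPrio_iff]
  rfl

theorem provides_iff (s : Student) : market.Provides μ s c ↔ Provides μ s c :=
  and_congr_right' (and_congr_right' (by rw [rivalCount_eq]))

theorem effProvider_iff (s : Student) : market.EffProvider μ s c ↔ EffProvider μ s c :=
  and_congr (provides_iff μ c s) (forall_congr' fun s' => imp_congr_right fun _ =>
    imp_congr_right fun _ => imp_congr (provides_iff μ c s') Nat.cast_lt)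

theorem absGroup_eq (s : Student) : market.absGroup μ s c = absGroup μ s c := by
  unfold Market.absGroup absGroup
  simp only [effProvider_iff, lt_irrefl, false_or]
  split_ifs <;> rfl

theorem absPrio_iff (s s' : Student) : market.absPrio μ c s s' ↔ AbsPrio μ c s s' := by
  simp only [Market.absPrio, absGroup_eq, Nat.cast_lt]

end

theorem not_absStable_of_blocked {μ : Student → Option School} (h : Blocked μ) :
    ¬ market.AbsStable μ := by
  rintro ⟨⟨-, hcap⟩, hwaste, henvy⟩
  rcases h with ⟨c, ℓ, hover⟩ | ⟨s, c, hpref, hfree⟩ | ⟨s, s', c, hs', hℓ, hpref, hprio⟩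
  · exact (hover.trans_le (hcap c ℓ)).false
  · exact hwaste ⟨s, c, hpref, (assignedCount_eq μ c _).trans_lt hfree⟩
  · exact henvy ⟨s, s', c, hs', hℓ, hpref, (absPrio_iff μ c s s').2 hprio⟩

def options (s : Student) : List (Option School) :=
  (prefList s).filter fun o => rank s o ≤ rank s none ∧ o.all fun c => 0 < capacity c (level s)

def candidate (v : ∀ s, Fin (options s).length) (s : Student) : Option School :=
  (options s).get (v s)

theorem mem_options {μ : Student → Option School} (h : market.IsMatching μ) (s : Student) :
    μ s ∈ options s := by
  refine List.mem_filter.2 ⟨mem_prefList s _, ?_⟩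
  cases hs : μ s with
  | none => simp
  | some c =>
    obtain ⟨hacc, hcap⟩ := h.1 s c hs
    simpa using ⟨hacc.le, hcap⟩

theorem exists_candidate_eq {μ : Student → Option School} (h : ∀ s, μ s ∈ options s) :
    ∃ v, candidate v = μ := by
  choose v hv using fun s => List.mem_iff_get.1 (h s)
  exact ⟨v, funext hv⟩

set_option maxRecDepth 100000 in
theorem blocked_candidate : ∀ v, Blocked (candidate v) := by
  decide

theorem numFamilies_market : market.numFamilies = 4 := by
  unfold Market.numFamilies
  convert (by decide :
    (Finset.univ.image fun s : Student => Finset.univ.filter (family s = family ·)).card = 4)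

theorem famSize_market_le (s : Student) : market.famSize s ≤ 2 := by
  unfold Market.famSize
  convert (by decide : ∀ s : Student, (Finset.univ.filter (family s = family ·)).card ≤ 2) s

theorem familyTB_market : market.FamilyTB := by
  simp only [Market.FamilyTB, Nat.cast_lt]
  decide

theorem not_absStable (μ : Student → Option School) : ¬ market.AbsStable μ := by
  intro hμ
  obtain ⟨v, rfl⟩ := exists_candidate_eq (mem_options hμ.1)
  exact not_absStable_of_blocked (blocked_candidate v) hμ

end AbsCounterexample

/-- There exists a finite market with contingent sibling priorities of
absolute type — four schools, two levels, four families each of size at most two,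
with a single tie-breaker at the family level — in which no contingent stable
matching under absolute priorities exists. -/
theorem no_abs_stable_exists :
    ∃ M : Market,
      Fintype.card M.School = 4 ∧
      Fintype.card M.Level = 2 ∧
      M.numFamilies = 4 ∧
      (∀ s, M.famSize s ≤ 2) ∧
      (∀ s c c', M.tb s c = M.tb s c') ∧
      M.FamilyTB ∧
      ¬ ∃ μ : M.Student → Option M.School, M.AbsStable μ :=
  ⟨AbsCounterexample.market, rfl, rfl, AbsCounterexample.numFamilies_market,
    AbsCounterexample.famSize_market_le, fun _ _ _ => rfl, AbsCounterexample.familyTB_market,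
    fun ⟨μ, hμ⟩ => AbsCounterexample.not_absStable μ hμ⟩
end

section
/- There exists a finite matching market instance with individual-level tie-breakers, families of size at most two, and two levels, in which no contingent stable matching under partial contingent priorities exists. -/
open scoped Classical

/-! The market has two families `{0, 1}` and `{2, 3}`, two schools with one and two seats, and
a single priority group, so only the tie-breakers order students. Of the 81 assignments (written
as the schools of students `0, 1, 2, 3`), feasibility and non-wastefulness leave nine. Seven have
a blocking pair in which no tie-breaker changes; in the other two, `(1, 0, ∅, 1)` and
`(0, 1, ∅, 1)`, a student at school `1` provides priority there, and the sibling who inherits the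
provider's tie-breaker overtakes a student at school `1`. Once contingent priorities are
transcribed into natural-number data, `decide` checks all assignments. -/

namespace Market

variable {M : Market}

theorem wPref_iff_not_pref {s : M.Student} {o o' : Option M.School} :
    M.wPref s o o' ↔ ¬ M.pref s o' o := by
  constructor
  · rintro (rfl | h) h'
    · exact M.pref_irrefl s o h'
    · exact M.pref_irrefl s o (M.pref_trans s o o' o h h')
  · intro h
    by_cases he : o = o'
    · exact Or.inl he
    · exact Or.inr ((M.pref_total s o o' he).resolve_right h)

def IsSibling (s t : M.Student) : Prop :=
  t ≠ s ∧ M.sameFamily s t ∧ ∀ s', s' ≠ s → M.sameFamily s s' → s' = t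

namespace IsSibling

variable {s t : M.Student} {μ : M.Student → Option M.School} {c : M.School}

theorem exists_iff (h : M.IsSibling s t) {P : M.Student → Prop} :
    (∃ s', s' ≠ s ∧ M.sameFamily s s' ∧ P s') ↔ P t :=
  ⟨fun ⟨s', hne, hfam, hP⟩ => h.2.2 s' hne hfam ▸ hP, fun hP => ⟨t, h.1, h.2.1, hP⟩⟩

theorem forall_iff (h : M.IsSibling s t) {P : M.Student → Prop} :
    (∀ s', s' ≠ s → M.sameFamily s s' → P s') ↔ P t :=
  ⟨fun hP => hP t h.1 h.2.1, fun hP s' hne hfam => h.2.2 s' hne hfam ▸ hP⟩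

theorem provides_iff (h : M.IsSibling s t) :
    M.Provides μ s c ↔
      μ s = some c ∧ M.wPref t (some c) (μ t) ∧ M.rivalCount μ s c < M.cap c (M.level s) := by
  rw [Provides, h.exists_iff]

theorem effProvider_iff (h : M.IsSibling s t) :
    M.EffProvider μ s c ↔ M.Provides μ s c ∧ (M.Provides μ t c → M.tb s c < M.tb t c) := by
  rw [EffProvider, h.forall_iff]

theorem partialTb_eq (h : M.IsSibling s t) :
    M.partialTb μ s c =
      if M.group s c = M.nGroups ∧ ¬ M.EffProvider μ s c ∧ M.EffProvider μ t c ∧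
          M.tb t c < M.tb s c
      then M.tb t c else M.tb s c := by
  unfold partialTb
  split_ifs with hin hout hout
  · obtain ⟨hne, hfam, -⟩ := hin.2.2.choose_spec
    rw [h.2.2 _ hne hfam]
  · exact absurd ⟨hin.1, hin.2.1, h.exists_iff.mp hin.2.2⟩ hout
  · exact absurd ⟨hout.1, hout.2.1, h.exists_iff.mpr hout.2.2⟩ hin
  · rfl

theorem famSize_eq_two (h : M.IsSibling s t) : M.famSize s = 2 := by
  have hfamily : Finset.univ.filter (M.sameFamily s) = {s, t} := by
    ext s'
    simp only [Finset.mem_filter, Finset.mem_univ, true_and, Finset.mem_insert,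
      Finset.mem_singleton]
    by_cases hs' : s' = s
    · exact iff_of_true (hs' ▸ M.fam_refl s) (Or.inl hs')
    · refine ⟨fun hfam => Or.inr (h.2.2 s' hs' hfam), ?_⟩
      rintro (rfl | rfl)
      · exact M.fam_refl _
      · exact h.2.1
  rw [famSize, hfamily, Finset.card_pair h.1.symm]

end IsSibling

end Market

namespace PartialPriorityCounterexample

def family : Fin 4 → Fin 2 := ![0, 0, 1, 1]

def sibling : Fin 4 → Fin 4 := ![1, 0, 3, 2]

def tieBreak : Fin 4 → Fin 2 → ℕ := ![![0, 2], ![2, 0], ![3, 3], ![1, 1]]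

/-- Position of an outcome in a student's preference list (`0` is the favourite, `none` is the
outside option). -/
def rank : Fin 4 → Option (Fin 2) → ℕ
  | s, none => ![2, 2, 2, 1] s
  | s, some c => ![![1, 0], ![0, 1], ![0, 1], ![2, 0]] s c

def capacity : Fin 2 → ℕ := ![1, 2]

theorem rank_injective (s : Fin 4) : Function.Injective (rank s) := by
  revert s; unfold Function.Injective; decide

theorem tieBreak_injective (c : Fin 2) : Function.Injective (tieBreak · c) := by
  revert c; unfold Function.Injective; decide

noncomputable abbrev market : Market where
  Student := Fin 4
  School := Fin 2
  Level := Bool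
  level _ := false
  sameFamily s s' := family s = family s'
  fam_refl _ := rfl
  fam_symm _ _ := Eq.symm
  fam_trans _ _ _ := Eq.trans
  cap c _ := capacity c
  pref s o o' := rank s o < rank s o'
  pref_irrefl _ _ := lt_irrefl _
  pref_trans _ _ _ _ := lt_trans
  pref_total s _ _ h := ((rank_injective s).ne h).lt_or_gt
  nGroups := 1
  nGroups_pos := le_rfl
  group _ _ := 1
  group_pos _ _ := le_rfl
  group_le _ _ := le_rfl
  tb s c := tieBreak s c
  tb_distinct c _ _ h := by
    simpa only [ne_eq, Nat.cast_inj] using (tieBreak_injective c).ne h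

theorem isSibling (s : Fin 4) : market.IsSibling s (sibling s) := by
  revert s
  show ∀ s : Fin 4, sibling s ≠ s ∧ family s = family (sibling s) ∧
    ∀ s' : Fin 4, s' ≠ s → family s = family s' → s' = sibling s
  decide

section Transcription

variable {μ : Fin 4 → Option (Fin 2)} {s s' : Fin 4} {c : Fin 2}

theorem wPref_iff {o o' : Option (Fin 2)} : market.wPref s o o' ↔ rank s o ≤ rank s o' :=
  Market.wPref_iff_not_pref.trans not_lt

theorem tb_lt_iff : market.tb s c < market.tb s' c ↔ tieBreak s c < tieBreak s' c :=
  Nat.cast_lt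

theorem initPrio_iff : market.initPrio c s s' ↔ tieBreak s c < tieBreak s' c :=
  ((or_iff_right (lt_irrefl 1)).trans (and_iff_right rfl)).trans tb_lt_iff

def rivals (μ : Fin 4 → Option (Fin 2)) (s : Fin 4) (c : Fin 2) : ℕ :=
  (Finset.univ.filter fun s'' =>
    tieBreak s'' c < tieBreak s c ∧ rank s'' (some c) ≤ rank s'' (μ s'')).card

theorem rivalCount_eq : market.rivalCount μ s c = rivals μ s c := by
  unfold Market.rivalCount rivals
  congr 1
  exact Finset.filter_congr fun s'' _ => by
    rw [initPrio_iff, wPref_iff]; exact and_iff_right rfl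

def provides (μ : Fin 4 → Option (Fin 2)) (s : Fin 4) (c : Fin 2) : Bool :=
  μ s = some c ∧ rank (sibling s) (some c) ≤ rank (sibling s) (μ (sibling s)) ∧
    rivals μ s c < capacity c

def isEffProvider (μ : Fin 4 → Option (Fin 2)) (s : Fin 4) (c : Fin 2) : Bool :=
  provides μ s c ∧ (provides μ (sibling s) c → tieBreak s c < tieBreak (sibling s) c)

def contingentTb (μ : Fin 4 → Option (Fin 2)) (s : Fin 4) (c : Fin 2) : ℕ :=
  if ¬ isEffProvider μ s c ∧ isEffProvider μ (sibling s) c ∧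
      tieBreak (sibling s) c < tieBreak s c
  then tieBreak (sibling s) c else tieBreak s c

theorem provides_iff : market.Provides μ s c ↔ provides μ s c := by
  rw [(isSibling s).provides_iff, wPref_iff, rivalCount_eq]
  simp [provides]

theorem effProvider_iff : market.EffProvider μ s c ↔ isEffProvider μ s c := by
  rw [(isSibling s).effProvider_iff, provides_iff, provides_iff, tb_lt_iff]
  simp only [isEffProvider, decide_eq_true_eq]

theorem partialTb_eq : market.partialTb μ s c = contingentTb μ s c := by
  rw [(isSibling s).partialTb_eq]
  simp only [effProvider_iff, contingentTb, Nat.cast_ite, Nat.cast_lt, true_and]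

def assigned (μ : Fin 4 → Option (Fin 2)) (c : Fin 2) : ℕ :=
  (Finset.univ.filter fun s => μ s = some c).card

theorem assignedCount_false : market.assignedCount μ c false = assigned μ c :=
  congrArg Finset.card (Finset.filter_congr fun _ _ => and_iff_left rfl)

theorem assignedCount_true : market.assignedCount μ c true = 0 :=
  Finset.card_eq_zero.mpr (Finset.filter_false_of_mem fun _ _ h => Bool.false_ne_true h.2)

def isStable (μ : Fin 4 → Option (Fin 2)) : Bool :=
  (∀ s c, μ s = some c → rank s (some c) < rank s none ∧ 0 < capacity c) ∧
  (∀ c, assigned μ c ≤ capacity c) ∧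
  (¬ ∃ s c, rank s (some c) < rank s (μ s) ∧ assigned μ c < capacity c) ∧
  ¬ ∃ s s' c, μ s' = some c ∧ rank s (some c) < rank s (μ s) ∧
    (contingentTb μ s c < contingentTb μ s' c ∨
      (contingentTb μ s c = contingentTb μ s' c ∧ tieBreak s c < tieBreak s' c))

theorem partialPrio_iff : market.partialPrio μ c s s' ↔
    contingentTb μ s c < contingentTb μ s' c ∨
      (contingentTb μ s c = contingentTb μ s' c ∧ tieBreak s c < tieBreak s' c) := by
  simp only [Market.partialPrio, partialTb_eq, Nat.cast_lt, Nat.cast_inj, lt_irrefl, false_or,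
    true_and]

theorem isMatching_iff : market.IsMatching μ ↔
    (∀ s c, μ s = some c → rank s (some c) < rank s none ∧ 0 < capacity c) ∧
      ∀ c, assigned μ c ≤ capacity c := by
  refine and_congr Iff.rfl (forall_congr' fun c => ?_)
  rw [Bool.forall_bool]
  exact (and_iff_left (assignedCount_true.trans_le (Nat.zero_le _))).trans
    (iff_of_eq (congrArg (· ≤ capacity c) assignedCount_false))

theorem nonWasteful_iff : market.NonWasteful μ ↔
    ¬ ∃ s c, rank s (some c) < rank s (μ s) ∧ assigned μ c < capacity c := by
  simp only [Market.NonWasteful, assignedCount_false]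

theorem partialStable_iff : market.PartialStable μ ↔ isStable μ := by
  simp only [Market.PartialStable, isMatching_iff, nonWasteful_iff, partialPrio_iff, isStable,
    decide_eq_true_eq, true_and, and_assoc]

end Transcription

theorem isStable_eq_false : ∀ μ, isStable μ = false := by
  decide

theorem not_exists_partialStable : ¬ ∃ μ, market.PartialStable μ := fun ⟨μ, hμ⟩ =>
  Bool.false_ne_true ((isStable_eq_false μ).symm.trans (partialStable_iff.mp hμ))

theorem famSize_le_two (s : Fin 4) : market.famSize s ≤ 2 :=
  (isSibling s).famSize_eq_two.le

end PartialPriorityCounterexample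

/-- There exists a finite market with individual-level tie-breakers,
families of size at most two, and two levels, in which no contingent stable
matching under partial priorities exists. -/
theorem no_partial_stable_exists :
    ∃ M : Market,
      (∀ s, M.famSize s ≤ 2) ∧
      Fintype.card M.Level = 2 ∧
      ¬ ∃ μ : M.Student → Option M.School, M.PartialStable μ :=
  ⟨PartialPriorityCounterexample.market, PartialPriorityCounterexample.famSize_le_two, rfl,
    PartialPriorityCounterexample.not_exists_partialStable⟩
end

section
/- When initial random tie-breakers are at the family level (every member of a family shares, up to order-preserving perturbation, the same tie-breaker at each school), the set of contingent stable matchings under partial contingent priorities coincides with the set of initially stable matchings; in particular, a contingent stable matching under partial priorities always exists and can be found in polynomial time by the student-proposing deferred acceptance algorithm. -/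
open scoped Classical

section Aux

/-- A transitive total relation on a nonempty finset has a top element. -/
theorem exists_top' {α : Type*} (r : α → α → Prop)
    (htr : ∀ a b c, r a b → r b c → r a c)
    (htot : ∀ a b, a ≠ b → r a b ∨ r b a) :
    ∀ (T : Finset α), T.Nonempty → ∃ m ∈ T, ∀ x ∈ T, x ≠ m → r m x := by
  intro T
  induction T using Finset.cons_induction with
  | empty => rintro ⟨x, hx⟩; exact absurd hx (Finset.notMem_empty x)
  | cons a T ha ih =>
      intro _
      rcases T.eq_empty_or_nonempty with rfl | hTne
      · refine ⟨a, Finset.mem_cons_self a ∅, ?_⟩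
        intro x hx hxa
        rw [Finset.mem_cons] at hx
        rcases hx with rfl | hx
        · exact absurd rfl hxa
        · exact absurd hx (Finset.notMem_empty x)
      obtain ⟨m, hm, hmtop⟩ := ih hTne
      have ham : a ≠ m := fun h => ha (h ▸ hm)
      rcases htot a m ham with h | h
      · refine ⟨a, Finset.mem_cons_self a T, ?_⟩
        intro x hx hxa
        rw [Finset.mem_cons] at hx
        rcases hx with rfl | hx
        · exact absurd rfl hxa
        · by_cases hxm : x = m
          · exact hxm ▸ h
          · exact htr _ _ _ h (hmtop x hx hxm)
      · refine ⟨m, Finset.mem_cons.2 (Or.inr hm), ?_⟩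
        intro x hx hxm
        rw [Finset.mem_cons] at hx
        rcases hx with rfl | hx
        · exact h
        · exact hmtop x hx hxm

/-- In a finite set with a strict total order, exactly `k` elements have
fewer than `k` elements above them (when `k ≤ |Q|`). -/
theorem filter_rank_card {α : Type*} [DecidableEq α] (r : α → α → Prop)
    (hirr : ∀ a, ¬ r a a)
    (htr : ∀ a b c, r a b → r b c → r a c)
    (htot : ∀ a b, a ≠ b → r a b ∨ r b a)
    (Q : Finset α) (k : ℕ) (hk : k ≤ Q.card) :
    (Q.filter fun t => (Q.filter fun u => r u t).card < k).card = k := by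
  classical
  set f : α → ℕ := fun t => (Q.filter fun u => r u t).card with hf
  have hmono : ∀ t ∈ Q, ∀ u ∈ Q, r t u → f t < f u := by
    intro t ht u hu htu
    apply Finset.card_lt_card
    constructor
    · intro v hv
      rw [Finset.mem_filter] at hv ⊢
      exact ⟨hv.1, htr _ _ _ hv.2 htu⟩
    · intro hsub
      have : t ∈ Q.filter fun v => r v t := hsub (by
        rw [Finset.mem_filter]; exact ⟨ht, htu⟩)
      rw [Finset.mem_filter] at this
      exact hirr t this.2
  have hinj : Set.InjOn f ↑Q := by
    intro t ht u hu h
    by_contra hne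
    rcases htot t u hne with h' | h'
    · exact absurd h (Nat.ne_of_lt (hmono t ht u hu h'))
    · exact absurd h.symm (Nat.ne_of_lt (hmono u hu t ht h'))
  have hlt : ∀ t ∈ Q, f t < Q.card := by
    intro t ht
    have hsub : (Q.filter fun u => r u t) ⊆ Q.erase t := by
      intro v hv
      rw [Finset.mem_filter] at hv
      rw [Finset.mem_erase]
      refine ⟨fun h => hirr t (h ▸ hv.2), hv.1⟩
    calc f t ≤ (Q.erase t).card := Finset.card_le_card hsub
      _ < Q.card := by
          rw [Finset.card_erase_of_mem ht]
          have : 0 < Q.card := Finset.card_pos.2 ⟨t, ht⟩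
          omega
  have himg : Q.image f = Finset.range Q.card := by
    apply Finset.eq_of_subset_of_card_le
    · intro n hn
      rw [Finset.mem_image] at hn
      obtain ⟨t, ht, rfl⟩ := hn
      exact Finset.mem_range.2 (hlt t ht)
    · rw [Finset.card_range, Finset.card_image_of_injOn hinj]
  have key : (Q.filter fun t => f t < k).image f = Finset.range k := by
    have h1 := Finset.filter_image (s := Q) (f := f) (p := fun n => n < k)
    rw [← h1, himg]
    ext n
    simp only [Finset.mem_filter, Finset.mem_range]
    omega
  have hsub : Set.InjOn f ↑(Q.filter fun t => f t < k) :=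
    hinj.mono (by intro x hx; exact (Finset.mem_filter.1 (by exact_mod_cast hx)).1)
  have := Finset.card_image_of_injOn hsub
  rw [key, Finset.card_range] at this
  exact this.symm

end Aux

namespace Market

variable (M : Market)

lemma pref_asymm {s : M.Student} {o o' : Option M.School}
    (h : M.pref s o o') : ¬ M.pref s o' o :=
  fun h' => M.pref_irrefl s o (M.pref_trans s o o' o h h')

lemma initPrio_irrefl (c : M.School) (a : M.Student) : ¬ M.initPrio c a a := by
  rintro (h | ⟨_, h⟩) <;> exact lt_irrefl _ h

lemma initPrio_trans (c : M.School) (a b d : M.Student)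
    (h1 : M.initPrio c a b) (h2 : M.initPrio c b d) : M.initPrio c a d := by
  rcases h1 with h1 | ⟨h1, h1'⟩ <;> rcases h2 with h2 | ⟨h2, h2'⟩
  · exact Or.inl (lt_trans h1 h2)
  · exact Or.inl (h2 ▸ h1)
  · exact Or.inl (h1 ▸ h2)
  · exact Or.inr ⟨h1.trans h2, lt_trans h1' h2'⟩

lemma initPrio_total (c : M.School) (a b : M.Student) (h : a ≠ b) :
    M.initPrio c a b ∨ M.initPrio c b a := by
  rcases lt_trichotomy (M.group a c) (M.group b c) with hg | hg | hg
  · exact Or.inl (Or.inl hg)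
  · rcases lt_or_gt_of_ne (M.tb_distinct c a b h) with ht | ht
    · exact Or.inl (Or.inr ⟨hg, ht⟩)
    · exact Or.inr (Or.inr ⟨hg.symm, ht⟩)
  · exact Or.inr (Or.inl hg)

lemma initPrio_asymm (c : M.School) (a b : M.Student)
    (h : M.initPrio c a b) : ¬ M.initPrio c b a := by
  intro h'
  exact M.initPrio_irrefl c a (M.initPrio_trans c a b a h h')

end Market


namespace Market

variable (M : Market)

/-! ### Deferred acceptance machinery -/

/-- Options still available to `s` given rejected pairs `A`. -/
noncomputable def optsM (A : Finset (M.Student × M.School)) (s : M.Student) :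
    Finset (Option M.School) :=
  Finset.univ.filter fun o => o = none ∨ ∃ c, o = some c ∧ M.pref s (some c) none ∧
    0 < M.cap c (M.level s) ∧ (s, c) ∉ A

lemma none_mem_optsM (A : Finset (M.Student × M.School)) (s : M.Student) :
    (none : Option M.School) ∈ M.optsM A s := by
  simp [optsM]

lemma some_mem_optsM (A : Finset (M.Student × M.School)) (s : M.Student) (c : M.School) :
    some c ∈ M.optsM A s ↔
      M.pref s (some c) none ∧ 0 < M.cap c (M.level s) ∧ (s, c) ∉ A := by
  simp [optsM]

/-- Current proposal of `s` given rejected pairs `A`. -/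
noncomputable def propo (A : Finset (M.Student × M.School)) (s : M.Student) :
    Option M.School :=
  (exists_top' (M.pref s) (M.pref_trans s) (M.pref_total s) (M.optsM A s)
    ⟨none, M.none_mem_optsM A s⟩).choose

lemma propo_mem (A : Finset (M.Student × M.School)) (s : M.Student) :
    M.propo A s ∈ M.optsM A s :=
  (exists_top' (M.pref s) (M.pref_trans s) (M.pref_total s) (M.optsM A s)
    ⟨none, M.none_mem_optsM A s⟩).choose_spec.1

lemma propo_best (A : Finset (M.Student × M.School)) (s : M.Student) :
    ∀ o ∈ M.optsM A s, o ≠ M.propo A s → M.pref s (M.propo A s) o :=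
  (exists_top' (M.pref s) (M.pref_trans s) (M.pref_total s) (M.optsM A s)
    ⟨none, M.none_mem_optsM A s⟩).choose_spec.2

lemma propo_some {A : Finset (M.Student × M.School)} {s : M.Student} {c : M.School}
    (h : M.propo A s = some c) :
    M.pref s (some c) none ∧ 0 < M.cap c (M.level s) ∧ (s, c) ∉ A := by
  have := M.propo_mem A s
  rw [h] at this
  exact (M.some_mem_optsM A s c).1 this

lemma optsM_antitone {A B : Finset (M.Student × M.School)} (h : A ⊆ B) (s : M.Student) :
    M.optsM B s ⊆ M.optsM A s := by
  intro o ho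
  rw [optsM, Finset.mem_filter] at ho ⊢
  refine ⟨ho.1, ?_⟩
  rcases ho.2 with h' | ⟨c, rfl, h1, h2, h3⟩
  · exact Or.inl h'
  · exact Or.inr ⟨c, rfl, h1, h2, fun hm => h3 (h hm)⟩

lemma propo_persist {A B : Finset (M.Student × M.School)} {s : M.Student} {c : M.School}
    (hAB : A ⊆ B) (h : M.propo A s = some c) (hB : (s, c) ∉ B) :
    M.propo B s = some c := by
  by_contra hne
  have h0 := M.propo_some h
  have h1 : (some c : Option M.School) ∈ M.optsM B s :=
    (M.some_mem_optsM B s c).2 ⟨h0.1, h0.2.1, hB⟩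
  have h2 : M.pref s (M.propo B s) (some c) :=
    M.propo_best B s _ h1 (fun e => hne e.symm)
  have h3 : M.propo B s ∈ M.optsM A s := M.optsM_antitone hAB s (M.propo_mem B s)
  have h4 : M.propo B s ≠ M.propo A s := by rw [h]; exact hne
  have h5 := M.propo_best A s _ h3 h4
  rw [h] at h5
  exact M.pref_asymm h2 h5

/-- Number of same-level students with higher initial priority at `c` currently
proposing to `c`. -/
noncomputable def aboveCnt (A : Finset (M.Student × M.School)) (s : M.Student)
    (c : M.School) : ℕ :=
  (Finset.univ.filter fun t => M.level t = M.level s ∧ M.initPrio c t s ∧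
    M.propo A t = some c).card

/-- One round of rejections. -/
noncomputable def Fstep (A : Finset (M.Student × M.School)) :
    Finset (M.Student × M.School) :=
  A ∪ Finset.univ.filter fun p => M.propo A p.1 = some p.2 ∧
    M.cap p.2 (M.level p.1) ≤ M.aboveCnt A p.1 p.2

lemma subset_Fstep (A : Finset (M.Student × M.School)) : A ⊆ M.Fstep A :=
  Finset.subset_union_left

/-- Invariant: every rejection is justified. -/
def INV (A : Finset (M.Student × M.School)) : Prop :=
  ∀ p ∈ A, M.cap p.2 (M.level p.1) ≤ M.aboveCnt A p.1 p.2

lemma INV_step {A : Finset (M.Student × M.School)} (h : M.INV A) : M.INV (M.Fstep A) := by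
  rintro ⟨s, c⟩ hp
  have hk : M.cap c (M.level s) ≤ M.aboveCnt A s c := by
    rcases Finset.mem_union.1 hp with h' | h'
    · exact h _ h'
    · exact (Finset.mem_filter.1 h').2.2
  set k := M.cap c (M.level s) with hkdef
  set Q := Finset.univ.filter fun t => M.level t = M.level s ∧ M.initPrio c t s ∧
    M.propo A t = some c with hQ
  have hQk : k ≤ Q.card := hk
  have hrank : ∀ t ∈ Q, M.aboveCnt A t c = (Q.filter fun u => M.initPrio c u t).card := by
    intro t ht
    rw [hQ, Finset.mem_filter] at ht
    obtain ⟨-, hlev, hpri, hprop⟩ := ht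
    unfold aboveCnt
    congr 1
    ext u
    simp only [hQ, Finset.mem_filter, Finset.mem_univ, true_and]
    constructor
    · rintro ⟨h1, h2, h3⟩
      exact ⟨⟨h1.trans hlev, M.initPrio_trans c u t s h2 hpri, h3⟩, h2⟩
    · rintro ⟨⟨h1, h2, h3⟩, h4⟩
      exact ⟨h1.trans hlev.symm, h4, h3⟩
  set S0 := Q.filter fun t => (Q.filter fun u => M.initPrio c u t).card < k with hS0
  have hScard : S0.card = k := filter_rank_card (M.initPrio c) (M.initPrio_irrefl c)
    (M.initPrio_trans c) (M.initPrio_total c) Q k hQk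
  have hsub : S0 ⊆ Finset.univ.filter fun t => M.level t = M.level s ∧
      M.initPrio c t s ∧ M.propo (M.Fstep A) t = some c := by
    intro t ht
    rw [hS0, Finset.mem_filter] at ht
    obtain ⟨htQ, hrk⟩ := ht
    have htQ' := htQ
    rw [hQ, Finset.mem_filter] at htQ'
    obtain ⟨-, hlev, hpri, hprop⟩ := htQ'
    have hnotF : (t, c) ∉ M.Fstep A := by
      intro hmem
      rcases Finset.mem_union.1 hmem with h' | h'
      · exact (M.propo_some hprop).2.2 h'
      · have hcap := (Finset.mem_filter.1 h').2.2
        rw [show M.aboveCnt A (t, c).1 (t, c).2 = M.aboveCnt A t c from rfl,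
          hrank t htQ] at hcap
        rw [show M.cap (t, c).2 (M.level (t, c).1) = M.cap c (M.level t) from rfl,
          hlev] at hcap
        omega
    have hpers := M.propo_persist (M.subset_Fstep A) hprop hnotF
    exact Finset.mem_filter.2 ⟨Finset.mem_univ t, hlev, hpri, hpers⟩
  have hfin := Finset.card_le_card hsub
  rw [hScard] at hfin
  exact hfin

lemma exists_fix : ∃ A : Finset (M.Student × M.School), M.Fstep A = A ∧ M.INV A := by
  by_contra hcon
  have hinv : ∀ n : ℕ, M.INV (M.Fstep^[n] ∅) := by
    intro n
    induction n with
    | zero => intro p hp; exact absurd hp (Finset.notMem_empty p)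
    | succ n ih =>
        rw [Function.iterate_succ_apply']
        exact M.INV_step ih
  have hne : ∀ n : ℕ, M.Fstep^[n + 1] ∅ ≠ M.Fstep^[n] ∅ := by
    intro n h
    rw [Function.iterate_succ_apply'] at h
    exact hcon ⟨_, h, hinv n⟩
  have hgrow : ∀ n : ℕ, n ≤ (M.Fstep^[n] ∅).card := by
    intro n
    induction n with
    | zero => exact Nat.zero_le _
    | succ n ih =>
        have hss : M.Fstep^[n] ∅ ⊂ M.Fstep^[n + 1] ∅ := by
          rw [Function.iterate_succ_apply']
          refine Finset.ssubset_iff_subset_ne.2 ⟨M.subset_Fstep _, fun h => ?_⟩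
          exact hne n (by rw [Function.iterate_succ_apply']; exact h.symm)
        have := Finset.card_lt_card hss
        omega
  have h1 := hgrow (Fintype.card (M.Student × M.School) + 1)
  have h2 := Finset.card_le_univ (M.Fstep^[Fintype.card (M.Student × M.School) + 1] ∅)
  omega

theorem exists_initStable : ∃ μ : M.Student → Option M.School, M.InitStable μ := by
  obtain ⟨A, hfix, hinv⟩ := M.exists_fix
  have hcap : ∀ c ℓ, (Finset.univ.filter fun s =>
      M.propo A s = some c ∧ M.level s = ℓ).card ≤ M.cap c ℓ := by
    intro c ℓ
    by_contra hgt
    push_neg at hgt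
    set P := Finset.univ.filter fun s => M.propo A s = some c ∧ M.level s = ℓ with hP
    have hPne : P.Nonempty := Finset.card_pos.1 (lt_of_le_of_lt (Nat.zero_le _) hgt)
    obtain ⟨m, hm, hmin⟩ := exists_top' (fun a b => M.initPrio c b a)
      (fun a b d h1 h2 => M.initPrio_trans c d b a h2 h1)
      (fun a b h => (M.initPrio_total c a b h).symm) P hPne
    have hm' := hm
    rw [hP, Finset.mem_filter] at hm'
    obtain ⟨-, hmc, hml⟩ := hm'
    have hsub : P.erase m ⊆ Finset.univ.filter fun t => M.level t = M.level m ∧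
        M.initPrio c t m ∧ M.propo A t = some c := by
      intro x hx
      obtain ⟨hxm, hxP⟩ := Finset.mem_erase.1 hx
      have hxP' := hxP
      rw [hP, Finset.mem_filter] at hxP'
      obtain ⟨-, hxc, hxl⟩ := hxP'
      exact Finset.mem_filter.2 ⟨Finset.mem_univ x, hxl.trans hml.symm, hmin x hxP hxm, hxc⟩
    have hcard := Finset.card_le_card hsub
    rw [Finset.card_erase_of_mem hm] at hcard
    have h1 : M.cap c (M.level m) ≤ M.aboveCnt A m c := by
      rw [hml]
      unfold aboveCnt
      omega
    have hmem : (m, c) ∈ M.Fstep A :=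
      Finset.mem_union_right _ (Finset.mem_filter.2 ⟨Finset.mem_univ _, hmc, h1⟩)
    rw [hfix] at hmem
    exact (M.propo_some hmc).2.2 hmem
  have hrej : ∀ s c, M.pref s (some c) (M.propo A s) → 0 < M.cap c (M.level s) →
      (s, c) ∈ A := by
    intro s c hpref hpos
    have hacc : M.pref s (some c) none := by
      cases hc : M.propo A s with
      | none => rw [hc] at hpref; exact hpref
      | some c' => rw [hc] at hpref; exact M.pref_trans s _ _ _ hpref (M.propo_some hc).1
    by_contra hnA
    have h1 : (some c : Option M.School) ∈ M.optsM A s :=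
      (M.some_mem_optsM A s c).2 ⟨hacc, hpos, hnA⟩
    have h2 : (some c : Option M.School) ≠ M.propo A s := by
      intro e
      rw [← e] at hpref
      exact M.pref_irrefl s (some c) hpref
    exact M.pref_asymm (M.propo_best A s _ h1 h2) hpref
  refine ⟨M.propo A, ⟨fun s c h => ⟨(M.propo_some h).1, (M.propo_some h).2.1⟩, hcap⟩, ?_, ?_⟩
  · rintro ⟨s, c, hpref, hlt⟩
    have hpos : 0 < M.cap c (M.level s) := lt_of_le_of_lt (Nat.zero_le _) hlt
    have h1 : M.cap c (M.level s) ≤ M.aboveCnt A s c := hinv _ (hrej s c hpref hpos)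
    have hsub : (Finset.univ.filter fun t => M.level t = M.level s ∧ M.initPrio c t s ∧
        M.propo A t = some c) ⊆
        Finset.univ.filter fun t => M.propo A t = some c ∧ M.level t = M.level s := by
      intro x hx
      obtain ⟨-, hl, -, hp⟩ := Finset.mem_filter.1 hx
      exact Finset.mem_filter.2 ⟨Finset.mem_univ x, hp, hl⟩
    have h2 := Finset.card_le_card hsub
    unfold assignedCount at hlt
    unfold aboveCnt at h1
    omega
  · rintro ⟨s, s', c, hs'c, hlev, hpref, hprio⟩
    have hpos : 0 < M.cap c (M.level s) := by
      rw [hlev]; exact (M.propo_some hs'c).2.1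
    have h1 : M.cap c (M.level s) ≤ M.aboveCnt A s c := hinv _ (hrej s c hpref hpos)
    have hnotmem : s' ∉ Finset.univ.filter fun t => M.level t = M.level s ∧
        M.initPrio c t s ∧ M.propo A t = some c := by
      intro h
      exact M.initPrio_asymm c s s' hprio (Finset.mem_filter.1 h).2.2.1
    have hsub : insert s' (Finset.univ.filter fun t => M.level t = M.level s ∧
        M.initPrio c t s ∧ M.propo A t = some c) ⊆
        Finset.univ.filter fun t => M.propo A t = some c ∧ M.level t = M.level s := by
      intro x hx
      rcases Finset.mem_insert.1 hx with rfl | hx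
      · exact Finset.mem_filter.2 ⟨Finset.mem_univ x, hs'c, hlev.symm⟩
      · obtain ⟨-, hl, -, hp⟩ := Finset.mem_filter.1 hx
        exact Finset.mem_filter.2 ⟨Finset.mem_univ x, hp, hl⟩
    have hcard := Finset.card_le_card hsub
    rw [Finset.card_insert_of_notMem hnotmem] at hcard
    have h3 := hcap c (M.level s)
    unfold aboveCnt at h1
    omega

end Market


namespace Market

variable (M : Market)

lemma effProvider_unique {μ : M.Student → Option M.School} {c : M.School}
    {x y : M.Student} (hx : M.EffProvider μ x c) (hy : M.EffProvider μ y c)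
    (hxy : M.sameFamily x y) : x = y := by
  by_contra h
  have h1 : M.tb x c < M.tb y c := hx.2 y (fun e => h e.symm) hxy hy.1
  have h2 : M.tb y c < M.tb x c := hy.2 x h (M.fam_symm _ _ hxy) hx.1
  exact lt_asymm h1 h2

lemma ptb_spec (μ : M.Student → Option M.School) (s : M.Student) (c : M.School) :
    ∃ a, M.partialTb μ s c = M.tb a c ∧ M.sameFamily s a ∧
      ((a = s ∧ ¬ (M.group s c = M.nGroups ∧ ¬ M.EffProvider μ s c ∧
          ∃ s', s' ≠ s ∧ M.sameFamily s s' ∧ M.EffProvider μ s' c ∧ M.tb s' c < M.tb s c)) ∨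
       (a ≠ s ∧ M.tb a c < M.tb s c ∧ M.EffProvider μ a c ∧ ¬ M.EffProvider μ s c ∧
          M.group s c = M.nGroups)) := by
  by_cases h : M.group s c = M.nGroups ∧ ¬ M.EffProvider μ s c ∧
      ∃ s', s' ≠ s ∧ M.sameFamily s s' ∧ M.EffProvider μ s' c ∧ M.tb s' c < M.tb s c
  · have hval : M.partialTb μ s c = M.tb h.2.2.choose c := by
      unfold partialTb
      rw [dif_pos h]
    obtain ⟨h1, h2, h3, h4⟩ := h.2.2.choose_spec
    exact ⟨h.2.2.choose, hval, h2, Or.inr ⟨h1, h4, h3, h.2.1, h.1⟩⟩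
  · have hval : M.partialTb μ s c = M.tb s c := by
      unfold partialTb
      rw [dif_neg h]
    exact ⟨s, hval, M.fam_refl s, Or.inl ⟨rfl, h⟩⟩

lemma partialPrio_iff_initPrio (hfam : M.FamilyTB) (μ : M.Student → Option M.School)
    (c : M.School) (s s' : M.Student) :
    M.partialPrio μ c s s' ↔ M.initPrio c s s' := by
  obtain ⟨a, ha, hsa, hca⟩ := M.ptb_spec μ s c
  obtain ⟨b, hb, hsb, hcb⟩ := M.ptb_spec μ s' c
  unfold partialPrio initPrio
  rw [ha, hb]
  refine or_congr Iff.rfl (and_congr_right fun hg => ?_)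
  by_cases hfamss : M.sameFamily s s'
  · by_cases hss : s = s'
    · subst hss
      have hab : M.tb a c = M.tb b c := ha.symm.trans hb
      constructor
      · rintro (h | ⟨-, h⟩)
        · rw [hab] at h; exact absurd h (lt_irrefl _)
        · exact h
      · intro h; exact absurd h (lt_irrefl _)
    · rcases hca with ⟨haeq, hnca⟩ | ⟨hane, halt, haeff, hneffs, hgs⟩
      · subst haeq
        rcases hcb with ⟨hbeq, hncb⟩ | ⟨hbne, hblt, hbeff, hs'neff, hg's'⟩
        · subst hbeq
          constructor
          · rintro (h | ⟨-, h⟩) <;> exact h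
          · exact Or.inl
        · by_cases hsb' : a = b
          · rw [← hsb']
            constructor
            · rintro (h | ⟨-, h⟩)
              · exact absurd h (lt_irrefl _)
              · exact h
            · intro h; exact Or.inr ⟨rfl, h⟩
          · have hfam_sb : M.sameFamily a b := M.fam_trans _ _ _ hfamss hsb
            have hgsn : M.group a c = M.nGroups := hg.trans hg's'
            have hnEffs : ¬ M.EffProvider μ a c := fun h =>
              hsb' (M.effProvider_unique h hbeff hfam_sb)
            have hnlt : ¬ M.tb b c < M.tb a c := fun hlt =>
              hnca ⟨hgsn, hnEffs, b, fun e => hsb' e.symm, hfam_sb, hbeff, hlt⟩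
            have hsb_lt : M.tb a c < M.tb b c :=
              lt_of_le_of_ne (not_lt.1 hnlt) (M.tb_distinct c a b hsb')
            constructor
            · intro _; exact lt_trans hsb_lt hblt
            · intro _; exact Or.inl hsb_lt
      · rcases hcb with ⟨hbeq, hncb⟩ | ⟨hbne, hblt, hbeff, hs'neff, hg's'⟩
        · subst hbeq
          by_cases has' : a = b
          · rw [has']
            constructor
            · rintro (h | ⟨-, h⟩)
              · exact absurd h (lt_irrefl _)
              · exact h
            · intro h; exact Or.inr ⟨rfl, h⟩
          · have hfam_s'a : M.sameFamily b a :=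
              M.fam_trans _ _ _ (M.fam_symm _ _ hfamss) hsa
            have hgs' : M.group b c = M.nGroups := hg.symm.trans hgs
            have hnEffs' : ¬ M.EffProvider μ b c := fun h =>
              has' (M.effProvider_unique haeff h (M.fam_symm _ _ hfam_s'a))
            have hnlt : ¬ M.tb a c < M.tb b c := fun hlt =>
              hncb ⟨hgs', hnEffs', a, has', hfam_s'a, haeff, hlt⟩
            have h2 : M.tb b c < M.tb a c :=
              lt_of_le_of_ne (not_lt.1 hnlt) (M.tb_distinct c b a (fun e => has' e.symm))
            constructor
            · rintro (h | ⟨he, -⟩)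
              · exact absurd h hnlt
              · exact absurd he (M.tb_distinct c a b has')
            · intro h; exact absurd h (lt_asymm (lt_trans h2 halt))
        · have hfam_ab : M.sameFamily a b :=
            M.fam_trans _ _ _ (M.fam_symm _ _ hsa) (M.fam_trans _ _ _ hfamss hsb)
          have hab : a = b := M.effProvider_unique haeff hbeff hfam_ab
          rw [hab]
          constructor
          · rintro (h | ⟨-, h⟩)
            · exact absurd h (lt_irrefl _)
            · exact h
          · intro h; exact Or.inr ⟨rfl, h⟩
  · have hne_ss' : s ≠ s' := fun e => hfamss (e ▸ M.fam_refl s)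
    have hsb' : s ≠ b := fun e => hfamss (M.fam_symm _ _ (e ▸ hsb))
    have hab : a ≠ b := fun e =>
      hfamss (M.fam_trans _ _ _ hsa (e ▸ M.fam_symm _ _ hsb))
    have key : M.tb a c < M.tb b c ↔ M.tb s c < M.tb s' c := by
      have h1 : M.tb a c < M.tb b c ↔ M.tb s c < M.tb b c :=
        hfam c a s b (M.fam_symm _ _ hsa)
          (fun h => hfamss (M.fam_trans _ _ _ hsa
            (M.fam_trans _ _ _ h (M.fam_symm _ _ hsb))))
      have h2 : M.tb b c < M.tb s c ↔ M.tb s' c < M.tb s c :=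
        hfam c b s' s (M.fam_symm _ _ hsb)
          (fun h => hfamss (M.fam_symm _ _ (M.fam_trans _ _ _ hsb h)))
      have hxs : M.tb s c ≠ M.tb b c := M.tb_distinct c s b hsb'
      have hxy : M.tb s c ≠ M.tb s' c := M.tb_distinct c s s' hne_ss'
      have h3 : M.tb s c < M.tb b c ↔ M.tb s c < M.tb s' c := by
        constructor
        · intro h
          have := h2.1
          rcases lt_or_gt_of_ne hxy with h' | h'
          · exact h'
          · exact absurd (h2.2 h') (not_lt.2 (le_of_lt h))
        · intro h
          rcases lt_or_gt_of_ne hxs with h' | h'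
          · exact h'
          · exact absurd (h2.1 h') (not_lt.2 (le_of_lt h))
      exact h1.trans h3
    constructor
    · rintro (h | ⟨he, -⟩)
      · exact key.1 h
      · exact absurd he (M.tb_distinct c a b hab)
    · intro h; exact Or.inl (key.2 h)

lemma partialStable_iff (hfam : M.FamilyTB) (μ : M.Student → Option M.School) :
    M.PartialStable μ ↔ M.InitStable μ := by
  unfold PartialStable InitStable
  refine and_congr Iff.rfl (and_congr Iff.rfl (not_congr ?_))
  refine exists_congr fun s => exists_congr fun s' => exists_congr fun c => ?_
  rw [M.partialPrio_iff_initPrio hfam μ c s s']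

end Market

/-- Under family-level tie-breakers, the contingent stable matchings
under partial priorities are exactly the initially stable matchings; in particular
a contingent stable matching under partial priorities always exists. -/
theorem partial_eq_init_of_familyTB (M : Market) (hfam : M.FamilyTB) :
    (∀ μ : M.Student → Option M.School, M.PartialStable μ ↔ M.InitStable μ) ∧
    (∃ μ : M.Student → Option M.School, M.PartialStable μ) := by
  refine ⟨fun μ => M.partialStable_iff hfam μ, ?_⟩
  obtain ⟨μ, hμ⟩ := M.exists_initStable
  exact ⟨μ, (M.partialStable_iff hfam μ).2 hμ⟩
end

section
/- There exists a finite matching market instance and a contingent stable matching under absolute priorities μ and another contingent stable matching μ' such that the sets of matched students under μ and μ' have different cardinalities; hence the Rural Hospital Theorem (invariance of the set of matched agents across stable matchings) fails for contingent stability with absolute priorities. -/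
open scoped Classical

/-!
Schools `A = 0` and `B = 1` have one seat at each of two levels; students `0, 2` are of level 0
and `1, 3` of level 1, `0` and `1` are single and `2, 3` are siblings. Everybody starts in the
single (lowest) group, the tie-breaking order is `1, 0, 2, 3`, and the preferences are
`0 : A ≻ ∅ ≻ B`, `1 : B ≻ A ≻ ∅`, `2 : A ≻ B ≻ ∅`, `3 : B ≻ A ≻ ∅`.

In `μ₁ = (A, A, B, B)` student 2 is the effective provider at `B`, and all four students are
matched. In `μ₂ = (∅, B, A, A)` student 3 is the effective provider at `A` (student 2 is not a
provider there: 0 outranks her initially and wants `A`). The siblings keep their group at `A`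
while everybody else is demoted, so 0 cannot claim 2's seat and stays unmatched, `B` being
unacceptable to her.
-/

namespace Market

variable {M : Market} {μ : M.Student → Option M.School} {s : M.Student} {c : M.School}

theorem Provides.matched_with_sibling (h : M.Provides μ s c) :
    μ s = some c ∧ ∃ s', s' ≠ s ∧ M.sameFamily s s' :=
  ⟨h.1, h.2.1.imp fun _ h' => ⟨h'.1, h'.2.1⟩⟩

theorem not_provides_of_cap_le_rivalCount (h : M.cap c (M.level s) ≤ M.rivalCount μ s c) :
    ¬ M.Provides μ s c :=
  fun hp => (h.trans_lt hp.2.2).false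

theorem absGroup_eq_group_of_effProvider (h : M.EffProvider μ s c) {s' : M.Student}
    (hne : s' ≠ s) (hfam : M.sameFamily s s') (hs' : μ s' = some c) :
    M.absGroup μ s c = M.group s c :=
  if_pos (Or.inr (Or.inl ⟨h, s', hne, hfam, hs'⟩))

theorem absGroup_eq_group_of_sibling_effProvider {s' : M.Student} (hne : s' ≠ s)
    (hfam : M.sameFamily s s') (h : M.EffProvider μ s' c) :
    M.absGroup μ s c = M.group s c :=
  if_pos (Or.inr (Or.inr ⟨s', hne, hfam, h⟩))

theorem absGroup_eq_of_forall_not_provides (hg : M.group s c = M.nGroups)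
    (h : ∀ s', M.sameFamily s s' → ¬ M.Provides μ s' c) :
    M.absGroup μ s c = M.nGroups + 1 := by
  refine if_neg ?_
  rintro (hlt | ⟨heff, -⟩ | ⟨s', -, hfam, heff⟩)
  · exact hlt.ne hg
  · exact h s (M.fam_refl s) heff.1
  · exact h s' hfam heff.1

end Market

namespace RuralHospitalCounterexample

def level : Fin 4 → Fin 2 := ![0, 1, 0, 1]

def family : Fin 4 → Fin 3 := ![0, 1, 2, 2]

def rank : Fin 4 → Option (Fin 2) → ℕ
  | 0, some 0 => 0 | 0, none => 1 | 0, some 1 => 2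
  | 1, some 1 => 0 | 1, some 0 => 1 | 1, none => 2
  | 2, some 0 => 0 | 2, some 1 => 1 | 2, none => 2
  | 3, some 1 => 0 | 3, some 0 => 1 | 3, none => 2

def tieBreak : Fin 4 → ℕ := ![1, 0, 2, 3]

theorem tieBreak_injective : Function.Injective tieBreak := by decide

@[reducible] noncomputable def market : Market where
  Student := Fin 4
  School := Fin 2
  Level := Fin 2
  level := level
  sameFamily s t := family s = family t
  fam_refl _ := rfl
  fam_symm _ _ := Eq.symm
  fam_trans _ _ _ := Eq.trans
  cap _ _ := 1
  pref s o o' := rank s o < rank s o'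
  pref_irrefl _ _ := lt_irrefl _
  pref_trans _ _ _ _ := lt_trans
  pref_total := by decide
  nGroups := 1
  nGroups_pos := le_rfl
  group _ _ := 1
  group_pos _ _ := le_rfl
  group_le _ _ := le_rfl
  tb s _ := tieBreak s
  tb_distinct _ _ _ h he := h (tieBreak_injective (Nat.cast_injective he))

def μ₁ : Fin 4 → Option (Fin 2) := ![some 0, some 0, some 1, some 1]
def μ₂ : Fin 4 → Option (Fin 2) := ![none, some 1, some 0, some 0]

theorem rivalCount_μ₁ : market.rivalCount μ₁ 2 1 = 0 := by
  rw [Market.rivalCount, Finset.card_eq_zero, Finset.filter_eq_empty_iff]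
  intro x _
  simp only [Market.initPrio, Market.wPref, Nat.cast_lt]
  revert x; decide

theorem rivalCount_μ₂ : market.rivalCount μ₂ 3 0 = 0 := by
  rw [Market.rivalCount, Finset.card_eq_zero, Finset.filter_eq_empty_iff]
  intro x _
  simp only [Market.initPrio, Market.wPref, Nat.cast_lt]
  revert x; decide

theorem one_le_rivalCount_μ₂ : 1 ≤ market.rivalCount μ₂ 2 0 :=
  Finset.card_pos.mpr ⟨(0 : Fin 4), Finset.mem_filter.mpr
    ⟨Finset.mem_univ _, rfl, Or.inr ⟨rfl, Nat.cast_lt.mpr (by decide)⟩, Or.inr (by decide)⟩⟩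

theorem effProvider_μ₁ : market.EffProvider μ₁ 2 1 := by
  refine ⟨⟨rfl, ⟨3, by decide, rfl, Or.inl rfl⟩, by rw [rivalCount_μ₁]; exact one_pos⟩, ?_⟩
  rintro s' hne hfam -
  obtain rfl : s' = 3 := by revert s' hne hfam; decide
  exact Nat.cast_lt.mpr (by decide)

theorem effProvider_μ₂ : market.EffProvider μ₂ 3 0 := by
  refine ⟨⟨rfl, ⟨2, by decide, rfl, Or.inl rfl⟩, by rw [rivalCount_μ₂]; exact one_pos⟩, ?_⟩
  intro s' hne hfam
  obtain rfl : s' = 2 := by revert s' hne hfam; decide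
  exact fun hprov => absurd hprov (Market.not_provides_of_cap_le_rivalCount one_le_rivalCount_μ₂)

theorem family_eq_two_of_ne {s t : Fin 4} (hne : t ≠ s) (hfam : family s = family t) :
    family s = 2 := by
  revert s t; decide

def contGroup (c₀ : Fin 2) (s : Fin 4) (c : Fin 2) : ℕ :=
  if family s = 2 ∧ c = c₀ then 1 else 2

section FamilyMatched

variable {μ : Fin 4 → Option (Fin 2)} {c₀ : Fin 2} {p : Fin 4}

theorem absGroup_eq_contGroup (hp : family p = 2) (heff : market.EffProvider μ p c₀)
    (hμ : ∀ s, family s = 2 → μ s = some c₀) (s : Fin 4) (c : Fin 2) :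
    market.absGroup μ s c = contGroup c₀ s c := by
  unfold contGroup
  split_ifs with h
  · obtain ⟨hs, rfl⟩ := h
    by_cases hsp : s = p
    · subst hsp
      obtain ⟨s', hne, hfam⟩ := heff.1.matched_with_sibling.2
      exact Market.absGroup_eq_group_of_effProvider heff hne hfam (hμ s' (hfam ▸ hs))
    · exact Market.absGroup_eq_group_of_sibling_effProvider (Ne.symm hsp) (hs.trans hp.symm) heff
  · refine Market.absGroup_eq_of_forall_not_provides rfl fun s' hfam hprov => h ?_
    obtain ⟨hs', t, hne, hft⟩ := hprov.matched_with_sibling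
    have hs'2 : family s' = 2 := family_eq_two_of_ne hne hft
    exact ⟨hfam.trans hs'2, Option.some_injective _ (hs'.symm.trans (hμ s' hs'2))⟩

theorem absStable_of_family_matched (hp : family p = 2) (heff : market.EffProvider μ p c₀)
    (hμ : ∀ s, family s = 2 → μ s = some c₀) (hmatch : market.IsMatching μ)
    (hwaste : market.NonWasteful μ)
    (hfair : ∀ (s s' : Fin 4) (c : Fin 2), μ s' = some c → level s = level s' →
      rank s (some c) < rank s (μ s) →
      ¬ (contGroup c₀ s c < contGroup c₀ s' c ∨
        (contGroup c₀ s c = contGroup c₀ s' c ∧ tieBreak s < tieBreak s'))) :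
    market.AbsStable μ := by
  refine ⟨hmatch, hwaste, fun ⟨s, s', c, hs', hlevel, hpref, hprio⟩ =>
    hfair s s' c hs' hlevel hpref ?_⟩
  simpa only [Market.absPrio, absGroup_eq_contGroup hp heff hμ, Nat.cast_lt] using hprio

end FamilyMatched

theorem absStable_μ₁ : market.AbsStable μ₁ :=
  absStable_of_family_matched (p := 2) rfl effProvider_μ₁ (by decide)
    (by simp only [Market.IsMatching]; decide) (by simp only [Market.NonWasteful]; decide)
    (by decide)

theorem absStable_μ₂ : market.AbsStable μ₂ :=
  absStable_of_family_matched (p := 3) rfl effProvider_μ₂ (by decide)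
    (by simp only [Market.IsMatching]; decide) (by simp only [Market.NonWasteful]; decide)
    (by decide)

end RuralHospitalCounterexample

/-- There is an instance with two contingent stable matchings under
absolute priorities whose sets of matched students have different cardinalities:
the Rural Hospital Theorem fails for contingent stability with absolute priorities. -/
theorem rural_hospital_fails_abs :
    ∃ (M : Market) (μ μ' : M.Student → Option M.School),
      M.AbsStable μ ∧ M.AbsStable μ' ∧
      (Finset.univ.filter fun s => μ s ≠ none).card ≠
        (Finset.univ.filter fun s => μ' s ≠ none).card :=
  ⟨_, _, _, RuralHospitalCounterexample.absStable_μ₁, RuralHospitalCounterexample.absStable_μ₂,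
    by decide⟩
end

section
/- In the non-existence instance for absolute contingent priorities, if school c4's capacity at level ℓ2 is increased from one to two seats, then a contingent stable matching under absolute priorities exists (in particular, both a1 and a2 can be matched to c4 together with y2). -/
open scoped Classical

/-- In the non-existence instance for absolute contingent priorities,
if school c4's capacity at level ℓ2 is increased from one to two seats, then a
contingent stable matching under absolute priorities exists; in particular both
a1 and a2 can be matched to c4 together with y2. -/
theorem abs_stable_exists_with_extra_seat
    (M : Market) (c1 c2 c3 c4 : M.School) (l1 l2 : M.Level)
    (a1 x1 d1 a2 d2 y2 : M.Student)
    (hCall : ∀ c : M.School, c = c1 ∨ c = c2 ∨ c = c3 ∨ c = c4)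
    (hCnd : ([c1, c2, c3, c4] : List M.School).Nodup)
    (hLall : ∀ ℓ : M.Level, ℓ = l1 ∨ ℓ = l2)
    (hLnd : l1 ≠ l2)
    (hSall : ∀ s : M.Student, s = a1 ∨ s = x1 ∨ s = d1 ∨ s = a2 ∨ s = d2 ∨ s = y2)
    (hSnd : ([a1, x1, d1, a2, d2, y2] : List M.Student).Nodup)
    (hla1 : M.level a1 = l1) (hlx1 : M.level x1 = l1) (hld1 : M.level d1 = l1)
    (hla2 : M.level a2 = l2) (hld2 : M.level d2 = l2) (hly2 : M.level y2 = l2)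
    (hfa : M.sameFamily a1 a2) (hfd : M.sameFamily d1 d2)
    (hfonly : ∀ s s', M.sameFamily s s' → s = s' ∨ (s = a1 ∧ s' = a2) ∨
      (s = a2 ∧ s' = a1) ∨ (s = d1 ∧ s' = d2) ∨ (s = d2 ∧ s' = d1))
    (hq11 : M.cap c1 l1 = 0) (hq12 : M.cap c1 l2 = 1)
    (hq21 : M.cap c2 l1 = 1) (hq22 : M.cap c2 l2 = 1)
    (hq31 : M.cap c3 l1 = 1) (hq32 : M.cap c3 l2 = 0)
    (hq41 : M.cap c4 l1 = 1)
    -- the extra seat: c4 now has two seats at level ℓ2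
    (hq42 : M.cap c4 l2 = 2)
    (hg : M.nGroups = 1)
    (hpa : ∀ s, s = a1 ∨ s = a2 → M.pref s (some c3) (some c4) ∧
      M.pref s (some c4) none ∧ ∀ c, c ≠ c3 → c ≠ c4 → M.pref s none (some c))
    (hpx : M.pref x1 (some c2) none ∧ ∀ c, c ≠ c2 → M.pref x1 none (some c))
    (hpd : ∀ s, s = d1 ∨ s = d2 → M.pref s (some c1) (some c2) ∧
      M.pref s (some c2) (some c3) ∧ M.pref s (some c3) none ∧
      ∀ c, c ≠ c1 → c ≠ c2 → c ≠ c3 → M.pref s none (some c))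
    (hpy : M.pref y2 (some c4) (some c1) ∧ M.pref y2 (some c1) none ∧
      ∀ c, c ≠ c4 → c ≠ c1 → M.pref y2 none (some c))
    (htb : ∀ c, M.tb y2 c < M.tb x1 c ∧ M.tb x1 c < M.tb d1 c ∧
      M.tb d1 c < M.tb d2 c ∧ M.tb d2 c < M.tb a1 c ∧ M.tb a1 c < M.tb a2 c) :
    ∃ μ : M.Student → Option M.School, M.AbsStable μ ∧
      μ a1 = some c4 ∧ μ a2 = some c4 ∧ μ y2 = some c4 := by
  classical
  simp only [List.nodup_cons, List.mem_cons, List.mem_singleton, List.not_mem_nil,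
    not_or, List.nodup_nil, and_true, not_false_iff] at hSnd hCnd
  obtain ⟨⟨na1x1, na1d1, na1a2, na1d2, na1y2⟩, ⟨nx1d1, nx1a2, nx1d2, nx1y2⟩,
    ⟨nd1a2, nd1d2, nd1y2⟩, ⟨na2d2, na2y2⟩, nd2y2⟩ := hSnd
  obtain ⟨⟨nc12, nc13, nc14⟩, ⟨nc23, nc24⟩, nc34⟩ := hCnd
  have nc21 : c2 ≠ c1 := Ne.symm nc12
  have nc31 : c3 ≠ c1 := Ne.symm nc13
  have nc41 : c4 ≠ c1 := Ne.symm nc14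
  have nc32 : c3 ≠ c2 := Ne.symm nc23
  have nc42 : c4 ≠ c2 := Ne.symm nc24
  have nc43 : c4 ≠ c3 := Ne.symm nc34
  -- asymmetry of preferences
  have asym : ∀ s o o', M.pref s o o' → ¬ M.pref s o' o := by
    intro s o o' h h'
    exact M.pref_irrefl s o (M.pref_trans s _ _ _ h h')
  have ha1 := hpa a1 (Or.inl rfl)
  have ha2 := hpa a2 (Or.inr rfl)
  have hd1 := hpd d1 (Or.inl rfl)
  have hd2 := hpd d2 (Or.inr rfl)
  -- derived preference facts
  have pa1_41 : M.pref a1 (some c4) (some c1) :=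
    M.pref_trans _ _ _ _ ha1.2.1 (ha1.2.2 c1 nc13 nc14)
  have pa1_42 : M.pref a1 (some c4) (some c2) :=
    M.pref_trans _ _ _ _ ha1.2.1 (ha1.2.2 c2 nc23 nc24)
  have pa2_41 : M.pref a2 (some c4) (some c1) :=
    M.pref_trans _ _ _ _ ha2.2.1 (ha2.2.2 c1 nc13 nc14)
  have pa2_42 : M.pref a2 (some c4) (some c2) :=
    M.pref_trans _ _ _ _ ha2.2.1 (ha2.2.2 c2 nc23 nc24)
  have px_21 : M.pref x1 (some c2) (some c1) :=
    M.pref_trans _ _ _ _ hpx.1 (hpx.2 c1 nc12)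
  have px_23 : M.pref x1 (some c2) (some c3) :=
    M.pref_trans _ _ _ _ hpx.1 (hpx.2 c3 nc32)
  have px_24 : M.pref x1 (some c2) (some c4) :=
    M.pref_trans _ _ _ _ hpx.1 (hpx.2 c4 nc42)
  have pd1_13 : M.pref d1 (some c1) (some c3) := M.pref_trans _ _ _ _ hd1.1 hd1.2.1
  have pd1_34 : M.pref d1 (some c3) (some c4) :=
    M.pref_trans _ _ _ _ hd1.2.2.1 (hd1.2.2.2 c4 nc41 nc42 nc43)
  have pd2_13 : M.pref d2 (some c1) (some c3) := M.pref_trans _ _ _ _ hd2.1 hd2.2.1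
  have pd2_14 : M.pref d2 (some c1) (some c4) :=
    M.pref_trans _ _ _ _ pd2_13
      (M.pref_trans _ _ _ _ hd2.2.2.1 (hd2.2.2.2 c4 nc41 nc42 nc43))
  have py_42 : M.pref y2 (some c4) (some c2) :=
    M.pref_trans _ _ _ _ hpy.1 (M.pref_trans _ _ _ _ hpy.2.1 (hpy.2.2 c2 nc24 nc21))
  have py_43 : M.pref y2 (some c4) (some c3) :=
    M.pref_trans _ _ _ _ hpy.1 (M.pref_trans _ _ _ _ hpy.2.1 (hpy.2.2 c3 nc34 nc31))
  -- the matching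
  set μ : M.Student → Option M.School := fun s =>
    if s = x1 then some c2 else if s = d1 then some c3 else if s = d2 then some c1 else some c4
    with hμ
  have ma1 : μ a1 = some c4 := by simp [hμ, na1x1, na1d1, na1d2]
  have mx1 : μ x1 = some c2 := by simp [hμ]
  have md1 : μ d1 = some c3 := by simp [hμ, Ne.symm nx1d1]
  have ma2 : μ a2 = some c4 := by simp [hμ, Ne.symm nx1a2, Ne.symm nd1a2, na2d2]
  have md2 : μ d2 = some c1 := by simp [hμ, Ne.symm nx1d2, Ne.symm nd1d2]
  have my2 : μ y2 = some c4 := by simp [hμ, Ne.symm nx1y2, Ne.symm nd1y2, Ne.symm nd2y2]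
  refine ⟨μ, ⟨?_, ?_, ?_⟩, ma1, ma2, my2⟩
  -- IsMatching
  · constructor
    · intro s c hc
      rcases hSall s with rfl | rfl | rfl | rfl | rfl | rfl
      · rw [ma1] at hc; obtain rfl := Option.some.inj hc
        exact ⟨ha1.2.1, by rw [hla1, hq41]; norm_num⟩
      · rw [mx1] at hc; obtain rfl := Option.some.inj hc
        exact ⟨hpx.1, by rw [hlx1, hq21]; norm_num⟩
      · rw [md1] at hc; obtain rfl := Option.some.inj hc
        exact ⟨hd1.2.2.1, by rw [hld1, hq31]; norm_num⟩
      · rw [ma2] at hc; obtain rfl := Option.some.inj hc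
        exact ⟨ha2.2.1, by rw [hla2, hq42]; norm_num⟩
      · rw [md2] at hc; obtain rfl := Option.some.inj hc
        refine ⟨M.pref_trans _ _ _ _ pd2_13 hd2.2.2.1, by rw [hld2, hq12]; norm_num⟩
      · rw [my2] at hc; obtain rfl := Option.some.inj hc
        refine ⟨M.pref_trans _ _ _ _ hpy.1 hpy.2.1, by rw [hly2, hq42]; norm_num⟩
    · -- capacity counts
      have key : ∀ (c : M.School) (ℓ : M.Level) (T : Finset M.Student),
          (∀ s, μ s = some c → M.level s = ℓ → s ∈ T) →
          (Finset.univ.filter fun s => μ s = some c ∧ M.level s = ℓ).card ≤ T.card := by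
        intro c ℓ T h
        refine Finset.card_le_card fun s hs => ?_
        obtain ⟨h1, h2⟩ := (Finset.mem_filter.mp hs).2
        exact h s h1 h2
      intro c ℓ
      rcases hCall c with rfl | rfl | rfl | rfl <;> rcases hLall ℓ with rfl | rfl
      · rw [hq11]
        refine le_trans (key _ _ (∅ : Finset M.Student) fun s h1 h2 => ?_) (by simp)
        rcases hSall s with rfl | rfl | rfl | rfl | rfl | rfl
        · rw [ma1] at h1; exact absurd (Option.some.inj h1) nc41
        · rw [mx1] at h1; exact absurd (Option.some.inj h1) nc21
        · rw [md1] at h1; exact absurd (Option.some.inj h1) nc31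
        · rw [ma2] at h1; exact absurd (Option.some.inj h1) nc41
        · rw [hld2] at h2; exact absurd h2.symm hLnd
        · rw [my2] at h1; exact absurd (Option.some.inj h1) nc41
      · rw [hq12]
        refine le_trans (key _ _ ({d2} : Finset M.Student) fun s h1 h2 => ?_) (by simp)
        rcases hSall s with rfl | rfl | rfl | rfl | rfl | rfl
        · rw [ma1] at h1; exact absurd (Option.some.inj h1) nc41
        · rw [mx1] at h1; exact absurd (Option.some.inj h1) nc21
        · rw [md1] at h1; exact absurd (Option.some.inj h1) nc31
        · rw [ma2] at h1; exact absurd (Option.some.inj h1) nc41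
        · simp
        · rw [my2] at h1; exact absurd (Option.some.inj h1) nc41
      · rw [hq21]
        refine le_trans (key _ _ ({x1} : Finset M.Student) fun s h1 h2 => ?_) (by simp)
        rcases hSall s with rfl | rfl | rfl | rfl | rfl | rfl
        · rw [ma1] at h1; exact absurd (Option.some.inj h1) nc42
        · simp
        · rw [md1] at h1; exact absurd (Option.some.inj h1) nc32
        · rw [ma2] at h1; exact absurd (Option.some.inj h1) nc42
        · rw [md2] at h1; exact absurd (Option.some.inj h1) nc12
        · rw [my2] at h1; exact absurd (Option.some.inj h1) nc42
      · rw [hq22]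
        refine le_trans (key _ _ ({x1} : Finset M.Student) fun s h1 h2 => ?_) (by simp)
        rcases hSall s with rfl | rfl | rfl | rfl | rfl | rfl
        · rw [ma1] at h1; exact absurd (Option.some.inj h1) nc42
        · simp
        · rw [md1] at h1; exact absurd (Option.some.inj h1) nc32
        · rw [ma2] at h1; exact absurd (Option.some.inj h1) nc42
        · rw [md2] at h1; exact absurd (Option.some.inj h1) nc12
        · rw [my2] at h1; exact absurd (Option.some.inj h1) nc42
      · rw [hq31]
        refine le_trans (key _ _ ({d1} : Finset M.Student) fun s h1 h2 => ?_) (by simp)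
        rcases hSall s with rfl | rfl | rfl | rfl | rfl | rfl
        · rw [ma1] at h1; exact absurd (Option.some.inj h1) nc43
        · rw [mx1] at h1; exact absurd (Option.some.inj h1) nc23
        · simp
        · rw [ma2] at h1; exact absurd (Option.some.inj h1) nc43
        · rw [md2] at h1; exact absurd (Option.some.inj h1) nc13
        · rw [my2] at h1; exact absurd (Option.some.inj h1) nc43
      · rw [hq32]
        refine le_trans (key _ _ (∅ : Finset M.Student) fun s h1 h2 => ?_) (by simp)
        rcases hSall s with rfl | rfl | rfl | rfl | rfl | rfl
        · rw [ma1] at h1; exact absurd (Option.some.inj h1) nc43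
        · rw [mx1] at h1; exact absurd (Option.some.inj h1) nc23
        · rw [hld1] at h2; exact absurd h2 hLnd
        · rw [ma2] at h1; exact absurd (Option.some.inj h1) nc43
        · rw [md2] at h1; exact absurd (Option.some.inj h1) nc13
        · rw [my2] at h1; exact absurd (Option.some.inj h1) nc43
      · rw [hq41]
        refine le_trans (key _ _ ({a1} : Finset M.Student) fun s h1 h2 => ?_) (by simp)
        rcases hSall s with rfl | rfl | rfl | rfl | rfl | rfl
        · simp
        · rw [mx1] at h1; exact absurd (Option.some.inj h1) nc24
        · rw [md1] at h1; exact absurd (Option.some.inj h1) nc34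
        · rw [hla2] at h2; exact absurd h2.symm hLnd
        · rw [md2] at h1; exact absurd (Option.some.inj h1) nc14
        · rw [hly2] at h2; exact absurd h2.symm hLnd
      · rw [hq42]
        refine le_trans (key _ _ ({a2, y2} : Finset M.Student) fun s h1 h2 => ?_) (le_trans (Finset.card_insert_le _ _) (by simp))
        rcases hSall s with rfl | rfl | rfl | rfl | rfl | rfl
        · rw [hla1] at h2; exact absurd h2 hLnd
        · rw [mx1] at h1; exact absurd (Option.some.inj h1) nc24
        · rw [md1] at h1; exact absurd (Option.some.inj h1) nc34
        · simp
        · rw [md2] at h1; exact absurd (Option.some.inj h1) nc14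
        · simp
  -- NonWasteful
  · rintro ⟨s, c, hpref, hcount⟩
    have one_le : ∀ (c : M.School) (ℓ : M.Level) (t : M.Student), μ t = some c →
        M.level t = ℓ → 1 ≤ M.assignedCount μ c ℓ := by
      intro c ℓ t h1 h2
      exact Finset.card_pos.mpr ⟨t, Finset.mem_filter.mpr ⟨Finset.mem_univ _, h1, h2⟩⟩
    rcases hSall s with rfl | rfl | rfl | rfl | rfl | rfl
    · rw [ma1] at hpref
      rcases hCall c with rfl | rfl | rfl | rfl
      · exact asym _ _ _ pa1_41 hpref
      · exact asym _ _ _ pa1_42 hpref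
      · rw [hla1, hq31] at hcount
        exact absurd (one_le _ _ d1 md1 hld1) (by omega)
      · exact M.pref_irrefl _ _ hpref
    · rw [mx1] at hpref
      rcases hCall c with rfl | rfl | rfl | rfl
      · exact asym _ _ _ px_21 hpref
      · exact M.pref_irrefl _ _ hpref
      · exact asym _ _ _ px_23 hpref
      · exact asym _ _ _ px_24 hpref
    · rw [md1] at hpref
      rcases hCall c with rfl | rfl | rfl | rfl
      · rw [hld1, hq11] at hcount; omega
      · rw [hld1, hq21] at hcount
        exact absurd (one_le _ _ x1 mx1 hlx1) (by omega)
      · exact M.pref_irrefl _ _ hpref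
      · exact asym _ _ _ pd1_34 hpref
    · rw [ma2] at hpref
      rcases hCall c with rfl | rfl | rfl | rfl
      · exact asym _ _ _ pa2_41 hpref
      · exact asym _ _ _ pa2_42 hpref
      · rw [hla2, hq32] at hcount; omega
      · exact M.pref_irrefl _ _ hpref
    · rw [md2] at hpref
      rcases hCall c with rfl | rfl | rfl | rfl
      · exact M.pref_irrefl _ _ hpref
      · exact asym _ _ _ hd2.1 hpref
      · exact asym _ _ _ pd2_13 hpref
      · exact asym _ _ _ pd2_14 hpref
    · rw [my2] at hpref
      rcases hCall c with rfl | rfl | rfl | rfl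
      · exact asym _ _ _ hpy.1 hpref
      · exact asym _ _ _ py_42 hpref
      · exact asym _ _ _ py_43 hpref
      · exact M.pref_irrefl _ _ hpref
  -- no blocking pairs
  · have hgrp : ∀ (s : M.Student) (c : M.School), M.group s c = 1 := by
      intro s c
      have := M.group_pos s c
      have := M.group_le s c
      omega
    -- absGroup is nGroups+1 = 2 for the relevant students
    have noProv : ∀ (s : M.Student) (c : M.School), μ s ≠ some c → ¬ M.Provides μ s c := by
      intro s c h hP
      exact h hP.1
    have noProvD1 : ¬ M.Provides μ d1 c3 := by
      rintro ⟨_, ⟨s', hne, hfam, hw⟩, _⟩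
      rcases hfonly d1 s' hfam with rfl | ⟨h, _⟩ | ⟨h, _⟩ | ⟨_, h⟩ | ⟨h, _⟩
      · exact hne rfl
      · exact na1d1 h.symm
      · exact nd1a2 h
      · rw [h, md2] at hw
        rcases hw with h' | h'
        · exact nc31 (Option.some.inj h')
        · exact asym _ _ _ pd2_13 h'
      · exact nd1d2 h
    have gA : ∀ s c, (¬ (M.EffProvider μ s c ∧ ∃ s', s' ≠ s ∧ M.sameFamily s s' ∧ μ s' = some c)) →
        (¬ ∃ s', s' ≠ s ∧ M.sameFamily s s' ∧ M.EffProvider μ s' c) →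
        M.absGroup μ s c = M.nGroups + 1 := by
      intro s c h1 h2
      have hcond : ¬ (M.group s c < M.nGroups ∨
          (M.EffProvider μ s c ∧ ∃ s', s' ≠ s ∧ M.sameFamily s s' ∧ μ s' = some c) ∨
          (∃ s', s' ≠ s ∧ M.sameFamily s s' ∧ M.EffProvider μ s' c)) := by
        rintro (h | h | h)
        · rw [hgrp, hg] at h; omega
        · exact h1 h
        · exact h2 h
      simp only [Market.absGroup, if_neg hcond]
    have famA1 : ∀ s', s' ≠ a1 → M.sameFamily a1 s' → s' = a2 := by
      intro s' hne hfam
      rcases hfonly a1 s' hfam with rfl | ⟨_, rfl⟩ | ⟨h, _⟩ | ⟨h, _⟩ | ⟨h, _⟩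
      · exact absurd rfl hne
      · rfl
      · exact absurd h na1a2
      · exact absurd h na1d1
      · exact absurd h na1d2
    have famD1 : ∀ s', s' ≠ d1 → M.sameFamily d1 s' → s' = d2 := by
      intro s' hne hfam
      rcases hfonly d1 s' hfam with rfl | ⟨h, _⟩ | ⟨h, _⟩ | ⟨_, rfl⟩ | ⟨h, _⟩
      · exact absurd rfl hne
      · exact absurd h.symm na1d1
      · exact absurd h nd1a2
      · rfl
      · exact absurd h nd1d2
    have famX1 : ∀ s', s' ≠ x1 → ¬ M.sameFamily x1 s' := by
      intro s' hne hfam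
      rcases hfonly x1 s' hfam with rfl | ⟨h, _⟩ | ⟨h, _⟩ | ⟨h, _⟩ | ⟨h, _⟩
      · exact hne rfl
      · exact na1x1 h.symm
      · exact nx1a2 h
      · exact nx1d1 h
      · exact nx1d2 h
    have gX1 : M.absGroup μ x1 c2 = M.nGroups + 1 := by
      refine gA x1 c2 ?_ ?_
      · rintro ⟨_, s', hne, hfam, _⟩
        exact famX1 s' hne hfam
      · rintro ⟨s', hne, hfam, _⟩
        exact famX1 s' hne hfam
    have gD1c2 : M.absGroup μ d1 c2 = M.nGroups + 1 := by
      refine gA d1 c2 ?_ ?_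
      · rintro ⟨hE, _⟩
        exact noProv d1 c2 (by rw [md1]; exact fun h => nc32 (Option.some.inj h)) hE.1
      · rintro ⟨s', hne, hfam, hE⟩
        rw [famD1 s' hne hfam] at hE
        exact noProv d2 c2 (by rw [md2]; exact fun h => nc12 (Option.some.inj h)) hE.1
    have gA1c3 : M.absGroup μ a1 c3 = M.nGroups + 1 := by
      refine gA a1 c3 ?_ ?_
      · rintro ⟨hE, _⟩
        exact noProv a1 c3 (by rw [ma1]; exact fun h => nc34 (Option.some.inj h).symm) hE.1
      · rintro ⟨s', hne, hfam, hE⟩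
        rw [famA1 s' hne hfam] at hE
        exact noProv a2 c3 (by rw [ma2]; exact fun h => nc43 (Option.some.inj h)) hE.1
    have gD1c3 : M.absGroup μ d1 c3 = M.nGroups + 1 := by
      refine gA d1 c3 ?_ ?_
      · rintro ⟨hE, _⟩
        exact noProvD1 hE.1
      · rintro ⟨s', hne, hfam, hE⟩
        rw [famD1 s' hne hfam] at hE
        exact noProv d2 c3 (by rw [md2]; exact fun h => nc13 (Option.some.inj h)) hE.1
    rintro ⟨s, s', c, hm, hlev, hpref, hprio⟩
    rcases hSall s' with rfl | rfl | rfl | rfl | rfl | rfl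
    -- s' = a1, c = c4, level l1
    · rw [ma1] at hm; obtain rfl := Option.some.inj hm
      rcases hSall s with rfl | rfl | rfl | rfl | rfl | rfl
      · rw [ma1] at hpref; exact M.pref_irrefl _ _ hpref
      · rw [mx1] at hpref; exact asym _ _ _ px_24 hpref
      · rw [md1] at hpref; exact asym _ _ _ pd1_34 hpref
      · rw [hla2, hla1] at hlev; exact hLnd hlev.symm
      · rw [hld2, hla1] at hlev; exact hLnd hlev.symm
      · rw [hly2, hla1] at hlev; exact hLnd hlev.symm
    -- s' = x1, c = c2
    · rw [mx1] at hm; obtain rfl := Option.some.inj hm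
      rcases hSall s with rfl | rfl | rfl | rfl | rfl | rfl
      · rw [ma1] at hpref; exact asym _ _ _ pa1_42 hpref
      · rw [mx1] at hpref; exact M.pref_irrefl _ _ hpref
      · -- d1 blocks with x1 at c2? no, absPrio fails
        rcases hprio with h | ⟨_, h⟩
        · rw [gX1, gD1c2] at h; omega
        · have h1 := (htb c2).2.1
          exact absurd h (lt_asymm h1)
      · rw [hla2, hlx1] at hlev; exact hLnd hlev.symm
      · rw [hld2, hlx1] at hlev; exact hLnd hlev.symm
      · rw [hly2, hlx1] at hlev; exact hLnd hlev.symm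
    -- s' = d1, c = c3
    · rw [md1] at hm; obtain rfl := Option.some.inj hm
      rcases hSall s with rfl | rfl | rfl | rfl | rfl | rfl
      · rcases hprio with h | ⟨_, h⟩
        · rw [gA1c3, gD1c3] at h; omega
        · have h1 := (htb c3).2.2.1
          have h2 := (htb c3).2.2.2.1
          exact absurd h (lt_asymm (lt_trans h1 h2))
      · rw [mx1] at hpref; exact asym _ _ _ px_23 hpref
      · rw [md1] at hpref; exact M.pref_irrefl _ _ hpref
      · rw [hla2, hld1] at hlev; exact hLnd hlev.symm
      · rw [hld2, hld1] at hlev; exact hLnd hlev.symm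
      · rw [hly2, hld1] at hlev; exact hLnd hlev.symm
    -- s' = a2, c = c4
    · rw [ma2] at hm; obtain rfl := Option.some.inj hm
      rcases hSall s with rfl | rfl | rfl | rfl | rfl | rfl
      · rw [hla1, hla2] at hlev; exact hLnd hlev
      · rw [hlx1, hla2] at hlev; exact hLnd hlev
      · rw [hld1, hla2] at hlev; exact hLnd hlev
      · rw [ma2] at hpref; exact M.pref_irrefl _ _ hpref
      · rw [md2] at hpref; exact asym _ _ _ pd2_14 hpref
      · rw [my2] at hpref; exact M.pref_irrefl _ _ hpref
    -- s' = d2, c = c1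
    · rw [md2] at hm; obtain rfl := Option.some.inj hm
      rcases hSall s with rfl | rfl | rfl | rfl | rfl | rfl
      · rw [hla1, hld2] at hlev; exact hLnd hlev
      · rw [hlx1, hld2] at hlev; exact hLnd hlev
      · rw [hld1, hld2] at hlev; exact hLnd hlev
      · rw [ma2] at hpref; exact asym _ _ _ pa2_41 hpref
      · rw [md2] at hpref; exact M.pref_irrefl _ _ hpref
      · rw [my2] at hpref; exact asym _ _ _ hpy.1 hpref
    -- s' = y2, c = c4
    · rw [my2] at hm; obtain rfl := Option.some.inj hm
      rcases hSall s with rfl | rfl | rfl | rfl | rfl | rfl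
      · rw [hla1, hly2] at hlev; exact hLnd hlev
      · rw [hlx1, hly2] at hlev; exact hLnd hlev
      · rw [hld1, hly2] at hlev; exact hLnd hlev
      · rw [ma2] at hpref; exact M.pref_irrefl _ _ hpref
      · rw [md2] at hpref; exact asym _ _ _ pd2_14 hpref
      · rw [my2] at hpref; exact M.pref_irrefl _ _ hpref
end
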